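/- Bellman-style recursion for the variance-augmented action value ĥq: define ĥr_{π,t}(s,a) = 2 r(s,a) q_{π,t}(s,a) − r(s,a)². Then ĥq_{π,T−1}(s,a) = ĥr_{π,T−1}(s,a), and for every t ∈ {0,…,T−2}, ĥq_{π,t}(s,a) = ĥr_{π,t}(s,a) + Σ_{s',a'} p(s'|s,a) π_{t+1}(a'|s') ĥq_{π,t+1}(s',a'). -/
import Mathlib


open Finset

section RL

variable {S A : Type*}

/-- Expectation, over the random trajectory of length `h` generated from time `t` and state `s`
by the behavior policy `μ` in the MDP with transition kernel `p`, of a functional `f` of the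
trajectory (recorded as the list of successive (action, next-state) pairs).  This is the finite
sum over all trajectories weighted by their probabilities; trajectories of zero probability
contribute `0`. -/
noncomputable def Etraj [Fintype S] [Fintype A] (p : S → A → S → ℝ)
    (μ : ℕ → S → A → ℝ) : ℕ → ℕ → S → (List (A × S) → ℝ) → ℝ
  | 0, _, _, f => f []
  | h + 1, t, s, f =>
      ∑ a : A, ∑ s' : S,
        μ t s a * p s a s' * Etraj p μ h (t + 1) s' (fun l => f ((a, s') :: l))

/-- Total (undiscounted) reward `Σ_i R_{i+1}` along a trajectory starting from state `s`. -/
noncomputable def retF (r : S → A → ℝ) : S → List (A × S) → ℝ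
  | _, [] => 0
  | s, (a, s') :: l => r s a + retF r s' l

/-- The PDIS return `G^PDIS(τ^{μ_{t:T-1}}_{t:T-1}) = Σ_i (∏_{j=t}^i ρ^{π,μ}_j) R_{i+1}` of a
trajectory starting at time `t` in state `s`, with target policy `π` and behavior policy `μ`,
in its recursive form. -/
noncomputable def pdisF (r : S → A → ℝ) (π μ : ℕ → S → A → ℝ) :
    ℕ → S → List (A × S) → ℝ
  | _, _, [] => 0
  | t, s, (a, s') :: l => π t s a / μ t s a * (r s a + pdisF r π μ (t + 1) s' l)

/-- State value function `v_{π,t}(s) = E_π[Σ_{i=t+1}^T R_i | S_t = s]` for horizon `T`. -/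
noncomputable def vval [Fintype S] [Fintype A] (p : S → A → S → ℝ) (r : S → A → ℝ)
    (π : ℕ → S → A → ℝ) (T t : ℕ) (s : S) : ℝ :=
  Etraj p π (T - t) t s (retF r s)

/-- Action value function `q_{π,t}(s,a) = E_π[Σ_{i=t+1}^T R_i | S_t = s, A_t = a]`. -/
noncomputable def qval [Fintype S] [Fintype A] (p : S → A → S → ℝ) (r : S → A → ℝ)
    (π : ℕ → S → A → ℝ) (T t : ℕ) (s : S) (a : A) : ℝ :=
  r s a + ∑ s' : S, p s a s' * vval p r π T (t + 1) s'

/-- Conditional expectation `E[G^PDIS(τ^{μ_{t:T-1}}_{t:T-1}) | S_t = s]`. -/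
noncomputable def Epdis [Fintype S] [Fintype A] (p : S → A → S → ℝ) (r : S → A → ℝ)
    (π μ : ℕ → S → A → ℝ) (T t : ℕ) (s : S) : ℝ :=
  Etraj p μ (T - t) t s (pdisF r π μ t s)

/-- Conditional variance `V(G^PDIS(τ^{μ_{t:T-1}}_{t:T-1}) | S_t = s)`. -/
noncomputable def Vpdis [Fintype S] [Fintype A] (p : S → A → S → ℝ) (r : S → A → ℝ)
    (π μ : ℕ → S → A → ℝ) (T t : ℕ) (s : S) : ℝ :=
  Etraj p μ (T - t) t s (fun l => pdisF r π μ t s l ^ 2) - Epdis p r π μ T t s ^ 2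

/-- `ν_{π,t}(s,a) = V_{S'~p(·|s,a)}(v_{π,t+1}(S'))` for `t ≤ T-2`, and `ν_{π,T-1}(s,a) = 0`. -/
noncomputable def nuval [Fintype S] [Fintype A] (p : S → A → S → ℝ) (r : S → A → ℝ)
    (π : ℕ → S → A → ℝ) (T t : ℕ) (s : S) (a : A) : ℝ :=
  if t = T - 1 then 0
  else (∑ s' : S, p s a s' * vval p r π T (t + 1) s' ^ 2)
       - (∑ s' : S, p s a s' * vval p r π T (t + 1) s') ^ 2

/-- The variance-augmented action value `ĥq_{π,t}(s,a)`:
`ĥq_{π,T-1}(s,a) = q_{π,T-1}(s,a)²` and, for `t ≤ T-2`,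
`ĥq_{π,t}(s,a) = q_{π,t}(s,a)² + ν_{π,t}(s,a) + Σ_{s'} p(s'|s,a) V(G^PDIS(τ^{π_{t+1:T-1}}) | S_{t+1}=s')`. -/
noncomputable def hq [Fintype S] [Fintype A] (p : S → A → S → ℝ) (r : S → A → ℝ)
    (π : ℕ → S → A → ℝ) (T t : ℕ) (s : S) (a : A) : ℝ :=
  if t = T - 1 then qval p r π T t s a ^ 2
  else qval p r π T t s a ^ 2 + nuval p r π T t s a
       + ∑ s' : S, p s a s' * Vpdis p r π π T (t + 1) s'

/-- The tailored behavior policy `ĥμ_t(a|s) ∝ sqrt(Σ_k π^(k)_t(a|s)² ĥq_{π^(k),t}(s,a))`,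
normalized over `a ∈ 𝒜` (uniform on `𝒜` if all the weights vanish). -/
noncomputable def hmu [Fintype S] [Fintype A] (p : S → A → S → ℝ) (r : S → A → ℝ)
    (K : ℕ) (π : Fin K → ℕ → S → A → ℝ) (T t : ℕ) (s : S) (a : A) : ℝ :=
  if (∑ b : A, Real.sqrt (∑ k : Fin K, π k t s b ^ 2 * hq p r (π k) T t s b)) = 0 then
    (Fintype.card A : ℝ)⁻¹
  else
    Real.sqrt (∑ k : Fin K, π k t s a ^ 2 * hq p r (π k) T t s a) /
      ∑ b : A, Real.sqrt (∑ k : Fin K, π k t s b ^ 2 * hq p r (π k) T t s b)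

/-- `w^(k)_t(s,a) = π^(k)_t(a|s)² ĥq_{π^(k),t}(s,a)`. -/
noncomputable def wRL [Fintype S] [Fintype A] (p : S → A → S → ℝ) (r : S → A → ℝ)
    (K : ℕ) (π : Fin K → ℕ → S → A → ℝ) (T : ℕ) (k : Fin K) (t : ℕ) (s : S) (a : A) : ℝ :=
  π k t s a ^ 2 * hq p r (π k) T t s a

/-- `η^(k)_t(s,a) = w^(k)_t(s,a) / w̄_t(s,a)` with `w̄_t(s,a) = (1/K) Σ_j w^(j)_t(s,a)`. -/
noncomputable def etaRL [Fintype S] [Fintype A] (p : S → A → S → ℝ) (r : S → A → ℝ)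
    (K : ℕ) (π : Fin K → ℕ → S → A → ℝ) (T : ℕ) (k : Fin K) (t : ℕ) (s : S) (a : A) : ℝ :=
  wRL p r K π T k t s a / ((∑ j : Fin K, wRL p r K π T j t s a) / K)

/-- `η̲_t = min_{k,s,a} η^(k)_t(s,a)`. -/
noncomputable def etaLoRL [Fintype S] [Fintype A] (p : S → A → S → ℝ) (r : S → A → ℝ)
    (K : ℕ) (π : Fin K → ℕ → S → A → ℝ) (T t : ℕ) : ℝ :=
  ⨅ x : Fin K × S × A, etaRL p r K π T x.1 t x.2.1 x.2.2

/-- `η̄_t = max_{k,s,a} η^(k)_t(s,a)`. -/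
noncomputable def etaHiRL [Fintype S] [Fintype A] (p : S → A → S → ℝ) (r : S → A → ℝ)
    (K : ℕ) (π : Fin K → ℕ → S → A → ℝ) (T t : ℕ) : ℝ :=
  ⨆ x : Fin K × S × A, etaRL p r K π T x.1 t x.2.1 x.2.2

end RL

section Aux

variable {S A : Type*} [Fintype S] [Fintype A]

/-- Probability weight of a trajectory. -/
noncomputable def wtAux (p : S → A → S → ℝ) (μ : ℕ → S → A → ℝ) :
    ℕ → S → List (A × S) → ℝ
  | _, _, [] => 1
  | t, s, (a, s') :: l => μ t s a * p s a s' * wtAux p μ (t + 1) s' l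

lemma Etraj_succ (p : S → A → S → ℝ) (μ : ℕ → S → A → ℝ) (h t : ℕ) (s : S)
    (f : List (A × S) → ℝ) :
    Etraj p μ (h + 1) t s f
      = ∑ a : A, ∑ s' : S,
          μ t s a * p s a s' * Etraj p μ h (t + 1) s' (fun l => f ((a, s') :: l)) := rfl

lemma Etraj_congr (p : S → A → S → ℝ) (μ : ℕ → S → A → ℝ) :
    ∀ (h t : ℕ) (s : S) (f g : List (A × S) → ℝ),
      (∀ l, wtAux p μ t s l ≠ 0 → f l = g l) →
      Etraj p μ h t s f = Etraj p μ h t s g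
  | 0, t, s, f, g, H => H [] (by simp [wtAux])
  | h + 1, t, s, f, g, H => by
    rw [Etraj_succ, Etraj_succ]
    refine Finset.sum_congr rfl fun a _ => Finset.sum_congr rfl fun s' _ => ?_
    by_cases hz : μ t s a * p s a s' = 0
    · rw [hz, zero_mul, zero_mul]
    · rw [Etraj_congr p μ h (t + 1) s' _ _ fun l hl =>
        H ((a, s') :: l) (by simp only [wtAux]; exact mul_ne_zero hz hl)]

lemma Etraj_add (p : S → A → S → ℝ) (μ : ℕ → S → A → ℝ) :
    ∀ (h t : ℕ) (s : S) (f g : List (A × S) → ℝ),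
      Etraj p μ h t s (fun l => f l + g l)
        = Etraj p μ h t s f + Etraj p μ h t s g
  | 0, _, _, _, _ => rfl
  | h + 1, t, s, f, g => by
    rw [Etraj_succ, Etraj_succ, Etraj_succ, ← Finset.sum_add_distrib]
    refine Finset.sum_congr rfl fun a _ => ?_
    rw [← Finset.sum_add_distrib]
    refine Finset.sum_congr rfl fun s' _ => ?_
    rw [Etraj_add p μ h (t + 1) s' _ _, mul_add]

lemma Etraj_smul (p : S → A → S → ℝ) (μ : ℕ → S → A → ℝ) (c : ℝ) :
    ∀ (h t : ℕ) (s : S) (f : List (A × S) → ℝ),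
      Etraj p μ h t s (fun l => c * f l) = c * Etraj p μ h t s f
  | 0, _, _, _ => rfl
  | h + 1, t, s, f => by
    rw [Etraj_succ, Etraj_succ, Finset.mul_sum]
    refine Finset.sum_congr rfl fun a _ => ?_
    rw [Finset.mul_sum]
    refine Finset.sum_congr rfl fun s' _ => ?_
    rw [Etraj_smul p μ c h (t + 1) s' _]
    ring

lemma Etraj_const (p : S → A → S → ℝ) (μ : ℕ → S → A → ℝ)
    (hp1 : ∀ s a, ∑ s' : S, p s a s' = 1) :
    ∀ (h t : ℕ),
      (∀ u s', t ≤ u → u < t + h → ∑ a : A, μ u s' a = 1) →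
      ∀ (s : S) (c : ℝ), Etraj p μ h t s (fun _ => c) = c
  | 0, _, _, _, _ => rfl
  | h + 1, t, hμ, s, c => by
    rw [Etraj_succ]
    have IH : ∀ s', Etraj p μ h (t + 1) s' (fun _ => c) = c := fun s' =>
      Etraj_const p μ hp1 h (t + 1)
        (fun u s'' h1 h2 => hμ u s'' (by omega) (by omega)) s' c
    simp only [IH]
    have h1 : ∀ a, ∑ s' : S, μ t s a * p s a s' * c = μ t s a * c := by
      intro a
      calc ∑ s' : S, μ t s a * p s a s' * c
          = (μ t s a * c) * ∑ s' : S, p s a s' := by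
            rw [Finset.mul_sum]; exact Finset.sum_congr rfl fun _ _ => by ring
        _ = μ t s a * c := by rw [hp1, mul_one]
    simp only [h1]
    rw [← Finset.sum_mul, hμ t s le_rfl (by omega), one_mul]

lemma pdis_eq_ret (p : S → A → S → ℝ) (r : S → A → ℝ) (π : ℕ → S → A → ℝ) :
    ∀ (l : List (A × S)) (t : ℕ) (s : S), wtAux p π t s l ≠ 0 →
      pdisF r π π t s l = retF r s l
  | [], _, _, _ => rfl
  | (a, s') :: l, t, s, hw => by
    simp only [wtAux] at hw
    rcases mul_ne_zero_iff.1 hw with ⟨h1, h2⟩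
    rcases mul_ne_zero_iff.1 h1 with ⟨hπ0, _⟩
    simp only [pdisF, retF]
    rw [div_self hπ0, one_mul, pdis_eq_ret p r π l (t + 1) s' h2]

lemma Epdis_eq (p : S → A → S → ℝ) (r : S → A → ℝ) (π : ℕ → S → A → ℝ)
    (T t : ℕ) (s : S) : Epdis p r π π T t s = vval p r π T t s :=
  Etraj_congr p π (T - t) t s _ _ fun l hl => pdis_eq_ret p r π l t s hl

lemma Vpdis_eq (p : S → A → S → ℝ) (r : S → A → ℝ) (π : ℕ → S → A → ℝ)
    (T t : ℕ) (s : S) :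
    Vpdis p r π π T t s
      = Etraj p π (T - t) t s (fun l => retF r s l ^ 2) - vval p r π T t s ^ 2 := by
  unfold Vpdis
  rw [Epdis_eq,
    Etraj_congr p π (T - t) t s _ (fun l => retF r s l ^ 2)
      fun l hl => by rw [pdis_eq_ret p r π l t s hl]]

lemma hq_eq (p : S → A → S → ℝ) (r : S → A → ℝ) (π : ℕ → S → A → ℝ)
    (T t : ℕ) (ht : t + 1 < T) (s : S) (a : A) :
    hq p r π T t s a
      = 2 * r s a * qval p r π T t s a - r s a ^ 2
        + ∑ s' : S, p s a s' *
            Etraj p π (T - (t + 1)) (t + 1) s' (fun l => retF r s' l ^ 2) := by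
  have hne : t ≠ T - 1 := by omega
  simp only [hq, nuval, if_neg hne, Vpdis_eq]
  have hq' : ∑ s' : S, p s a s' * vval p r π T (t + 1) s'
      = qval p r π T t s a - r s a := by
    simp only [qval]; ring
  simp only [mul_sub, Finset.sum_sub_distrib]
  rw [hq']
  ring

lemma key_lemma (p : S → A → S → ℝ) (r : S → A → ℝ) (π : ℕ → S → A → ℝ)
    (hp1 : ∀ s a, ∑ s' : S, p s a s' = 1) (T : ℕ)
    (hπ : ∀ t s, t < T → ∑ a : A, π t s a = 1) :
    ∀ (n t : ℕ), t + n + 1 = T → ∀ s : S,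
      Etraj p π (n + 1) t s (fun l => retF r s l ^ 2)
        = ∑ a : A, π t s a * hq p r π T t s a := by
  intro n
  induction n with
  | zero =>
    intro t hT s
    have hTt : T = t + 1 := by omega
    subst hTt
    rw [Etraj_succ]
    have hqr : ∀ a, qval p r π (t + 1) t s a = r s a := by
      intro a
      simp [qval, vval, Nat.sub_self, Etraj, retF]
    have hhq : ∀ a, hq p r π (t + 1) t s a = r s a ^ 2 := by
      intro a
      rw [hq, if_pos (by omega : t = t + 1 - 1), hqr]
    simp only [hhq, Etraj, retF, add_zero]
    refine Finset.sum_congr rfl fun a _ => ?_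
    calc ∑ s' : S, π t s a * p s a s' * r s a ^ 2
        = (π t s a * r s a ^ 2) * ∑ s' : S, p s a s' := by
          rw [Finset.mul_sum]; exact Finset.sum_congr rfl fun _ _ => by ring
      _ = π t s a * r s a ^ 2 := by rw [hp1, mul_one]
  | succ n IH =>
    intro t hT s
    rw [Etraj_succ]
    set M : S → ℝ :=
      fun s' => Etraj p π (n + 1) (t + 1) s' (fun l => retF r s' l ^ 2) with hM
    have expand : ∀ (a : A) (s' : S),
        Etraj p π (n + 1) (t + 1) s' (fun l => retF r s ((a, s') :: l) ^ 2)
          = r s a ^ 2 + (2 * r s a * vval p r π T (t + 1) s' + M s') := by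
      intro a s'
      have h1 : (fun l => retF r s ((a, s') :: l) ^ 2)
          = fun l => (fun _ : List (A × S) => r s a ^ 2) l
              + ((fun l => 2 * r s a * retF r s' l) l + (fun l => retF r s' l ^ 2) l) := by
        funext l; simp only [retF]; ring
      rw [h1, Etraj_add, Etraj_add,
        Etraj_const p π hp1 (n + 1) (t + 1)
          (fun u s'' h1 h2 => hπ u s'' (by omega)) s' (r s a ^ 2),
        Etraj_smul]
      have hvv : vval p r π T (t + 1) s'
          = Etraj p π (n + 1) (t + 1) s' (retF r s') := by
        rw [vval, show T - (t + 1) = n + 1 from by omega]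
      rw [hvv, hM]
    simp only [expand]
    rw [show (∑ a : A, π t s a * hq p r π T t s a)
        = ∑ a : A, π t s a *
            (2 * r s a * qval p r π T t s a - r s a ^ 2 + ∑ s' : S, p s a s' * M s')
      from Finset.sum_congr rfl fun a _ => by
        rw [hq_eq p r π T t (by omega) s a,
          show T - (t + 1) = n + 1 from by omega]]
    refine Finset.sum_congr rfl fun a _ => ?_
    have hqv : qval p r π T t s a
        = r s a + ∑ s' : S, p s a s' * vval p r π T (t + 1) s' := rfl
    have e1 : ∑ s' : S,
        π t s a * p s a s' * (r s a ^ 2 + (2 * r s a * vval p r π T (t + 1) s' + M s'))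
        = π t s a * (r s a ^ 2 * ∑ s' : S, p s a s'
            + 2 * r s a * ∑ s' : S, p s a s' * vval p r π T (t + 1) s'
            + ∑ s' : S, p s a s' * M s') := by
      simp only [mul_add, add_mul, Finset.mul_sum, ← Finset.sum_add_distrib]
      exact Finset.sum_congr rfl fun s' _ => by ring
    rw [e1, hp1, hqv]
    ring

end Aux

/-- Bellman-style recursion for the variance-augmented action value `ĥq`,
with `ĥr_{π,t}(s,a) = 2 r(s,a) q_{π,t}(s,a) - r(s,a)²`: `ĥq_{π,T-1}(s,a) = ĥr_{π,T-1}(s,a)`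
and, for `t ∈ {0,…,T-2}`,
`ĥq_{π,t}(s,a) = ĥr_{π,t}(s,a) + Σ_{s',a'} p(s'|s,a) π_{t+1}(a'|s') ĥq_{π,t+1}(s',a')`. -/
theorem stmt16 {S A : Type*} [Fintype S] [Fintype A] [Nonempty S] [Nonempty A]
    (p : S → A → S → ℝ) (r : S → A → ℝ)
    (hp0 : ∀ s a s', 0 ≤ p s a s') (hp1 : ∀ s a, ∑ s' : S, p s a s' = 1)
    (T : ℕ) (hT : 1 ≤ T)
    (π : ℕ → S → A → ℝ)
    (hπ : ∀ t s, t < T → (∀ a, 0 ≤ π t s a) ∧ (∑ a : A, π t s a = 1)) :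
    (∀ (s : S) (a : A),
      hq p r π T (T - 1) s a
        = 2 * r s a * qval p r π T (T - 1) s a - r s a ^ 2) ∧
    (∀ t : ℕ, t + 1 < T → ∀ (s : S) (a : A),
      hq p r π T t s a
        = (2 * r s a * qval p r π T t s a - r s a ^ 2)
          + ∑ s' : S, ∑ a' : A, p s a s' * π (t + 1) s' a' * hq p r π T (t + 1) s' a') := by
  constructor
  · intro s a
    have hqr : qval p r π T (T - 1) s a = r s a := by
      have h1 : T - 1 + 1 = T := by omega
      have hv : ∀ s', vval p r π T (T - 1 + 1) s' = 0 := by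
        intro s'
        rw [h1, vval, Nat.sub_self]
        simp [Etraj, retF]
      simp [qval, hv]
    rw [hq, if_pos rfl, hqr]
    ring
  · intro t ht s a
    rw [hq_eq p r π T t ht s a]
    congr 1
    refine Finset.sum_congr rfl fun s' _ => ?_
    rw [show T - (t + 1) = (T - t - 2) + 1 from by omega,
      key_lemma p r π hp1 T (fun u s hu => (hπ u s hu).2) (T - t - 2) (t + 1)
        (by omega) s',
      Finset.mul_sum]
    exact Finset.sum_congr rfl fun a' _ => by ring
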